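/- arXiv:1510.05043 — 2 statements merged into one kernel-verified Lean document; each statement's English description precedes it below -/
import Mathlib

section
/- For the complete graph K_n on n vertices with unit edge weights, every rooted binary tree T whose leaves are in bijection with the vertices has hierarchical clustering cost exactly (n^3 - n)/3, where the cost is the sum over all vertex pairs {i,j} of the number of leaves of the subtree rooted at the lowest common ancestor of i and j. -/
/-! Sum `|leaves(T[i ∨ j])|` over *ordered* pairs of leaves. At a node splitting `a + b` leaves
into `a` and `b`, the cross pairs contribute `2ab(a + b)`, and since
`2(a + b)³ + (a + b) = (2a³ + a) + (2b³ + b) + 6ab(a + b)`, induction gives `3 · sum = 2m³ + m`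
for a tree with `m` distinct leaves. The ordered sum is twice the cost plus `n`, one for each
diagonal pair. -/

open Finset

/-- A rooted binary tree whose leaves are labeled by elements of `Fin n`. -/
inductive HTree (n : ℕ) : Type where
  | leaf : Fin n → HTree n
  | node : HTree n → HTree n → HTree n

namespace HTree

variable {n : ℕ}

/-- The list of leaf labels, left to right. -/
def leafList : HTree n → List (Fin n)
  | .leaf v => [v]
  | .node l r => l.leafList ++ r.leafList

/-- The set of leaf labels of a tree. -/
def leaves (T : HTree n) : Finset (Fin n) := T.leafList.toFinset

/-- `T` is a hierarchical clustering tree of the whole vertex set `Fin n`: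
its leaves are in one-to-one correspondence with `Fin n`. -/
def IsFullTree (T : HTree n) : Prop := T.leafList.Nodup ∧ T.leaves = Finset.univ

/-- `|leaves(T[i ∨ j])|`: the number of leaves of the subtree rooted at the
lowest common ancestor of leaves `i` and `j`. -/
def lcaSize : HTree n → Fin n → Fin n → ℕ
  | .leaf _, _, _ => 1
  | .node l r, i, j =>
    if i ∈ l.leaves ∧ j ∈ l.leaves then l.lcaSize i j
    else if i ∈ r.leaves ∧ j ∈ r.leaves then r.lcaSize i j
    else (l.leaves ∪ r.leaves).card

/-- `cost_G(T) = Σ_{{i,j}} w_{ij} |leaves(T[i ∨ j])|`, the sum being over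
unordered pairs (represented as ordered pairs `p.1 < p.2`). -/
def pairCost (w : Fin n → Fin n → ℝ) (T : HTree n) : ℝ :=
  ∑ p ∈ Finset.univ.filter (fun p : Fin n × Fin n => p.1 < p.2),
    w p.1 p.2 * (T.lcaSize p.1 p.2 : ℝ)

/-- `w(A, B)`: total weight of edges between `A` and `B`. -/
def cut (w : Fin n → Fin n → ℝ) (A B : Finset (Fin n)) : ℝ :=
  ∑ i ∈ A, ∑ j ∈ B, w i j

/-- The sum-of-splits formulation of the cost:
`Σ over internal splits S → (S₁,S₂) of |S| ⬝ w(S₁,S₂)`. -/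
def splitCost (w : Fin n → Fin n → ℝ) : HTree n → ℝ
  | .leaf _ => 0
  | .node l r =>
      ((l.leaves ∪ r.leaves).card : ℝ) * cut w l.leaves r.leaves
        + splitCost w l + splitCost w r

/-- `Subtree t T`: `t` occurs as a subtree of `T`. -/
inductive Subtree : HTree n → HTree n → Prop
  | refl (t : HTree n) : Subtree t t
  | left {t l r : HTree n} : Subtree t l → Subtree t (.node l r)
  | right {t l r : HTree n} : Subtree t r → Subtree t (.node l r)

end HTree

theorem Finset.sum_prod_eq_two_nsmul_sum_lt_add_sum_diag {α M : Type*} [Fintype α] [LinearOrder α]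
    [AddCommMonoid M] (f : α → α → M) (hf : ∀ i j, f i j = f j i) :
    ∑ p : α × α, f p.1 p.2 = 2 • ∑ p ∈ univ.filter (fun p : α × α => p.1 < p.2), f p.1 p.2
      + ∑ i, f i i := by
  rw [← sum_filter_add_sum_filter_not univ (fun p : α × α => p.1 < p.2),
    ← sum_filter_add_sum_filter_not (univ.filter fun p : α × α => ¬p.1 < p.2)
      (fun p : α × α => p.2 < p.1), filter_filter, filter_filter]
  have hgt : ∑ p ∈ univ.filter (fun p : α × α => ¬p.1 < p.2 ∧ p.2 < p.1), f p.1 p.2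
      = ∑ p ∈ univ.filter (fun p : α × α => p.1 < p.2), f p.1 p.2 :=
    sum_equiv (Equiv.prodComm α α) (by simpa using fun _ _ => le_of_lt) fun p _ => hf p.1 p.2
  have hdiag : ∑ p ∈ univ.filter (fun p : α × α => ¬p.1 < p.2 ∧ ¬p.2 < p.1), f p.1 p.2
      = ∑ i, f i i := by
    rw [← sum_diag univ fun p : α × α => f p.1 p.2]
    exact sum_congr (by ext; simp [mem_diag, le_antisymm_iff, and_comm]) fun _ _ => rfl
  rw [hgt, hdiag, two_nsmul, add_assoc]

namespace HTree

variable {n : ℕ}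

theorem leaves_node (l r : HTree n) : (node l r).leaves = l.leaves ∪ r.leaves := by
  simp [leaves, leafList]

theorem lcaSize_comm (t : HTree n) (i j : Fin n) : t.lcaSize i j = t.lcaSize j i := by
  induction t with
  | leaf => rfl
  | node l r ihl ihr =>
    simp only [lcaSize, ihl, ihr]
    exact if_congr and_comm rfl (if_congr and_comm rfl rfl)

theorem lcaSize_self {t : HTree n} {i : Fin n} (h : i ∈ t.leaves) : t.lcaSize i i = 1 := by
  induction t with
  | leaf => rfl
  | node l r ihl ihr =>
    rw [leaves_node, mem_union] at h
    by_cases hl : i ∈ l.leaves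
    · simp [lcaSize, hl, ihl hl]
    · have hr := h.resolve_left hl
      simp [lcaSize, hl, hr, ihr hr]

section Node

variable {l r : HTree n} {i j : Fin n}

theorem lcaSize_node_of_mem_left (hi : i ∈ l.leaves) (hj : j ∈ l.leaves) :
    (node l r).lcaSize i j = l.lcaSize i j := by
  simp [lcaSize, hi, hj]

theorem lcaSize_node_of_mem_right (hd : Disjoint l.leaves r.leaves) (hi : i ∈ r.leaves)
    (hj : j ∈ r.leaves) : (node l r).lcaSize i j = r.lcaSize i j := by
  simp [lcaSize, disjoint_right.1 hd hi, hi, hj]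

theorem lcaSize_node_of_mem_left_of_mem_right (hd : Disjoint l.leaves r.leaves)
    (hi : i ∈ l.leaves) (hj : j ∈ r.leaves) :
    (node l r).lcaSize i j = #l.leaves + #r.leaves := by
  simp [lcaSize, disjoint_left.1 hd hi, disjoint_right.1 hd hj, card_union_of_disjoint hd]

end Node

def lcaSum (t : HTree n) : ℕ := ∑ i ∈ t.leaves, ∑ j ∈ t.leaves, t.lcaSize i j

theorem lcaSum_node {l r : HTree n} (hd : Disjoint l.leaves r.leaves) :
    (node l r).lcaSum =
      l.lcaSum + r.lcaSum + 2 * (#l.leaves * #r.leaves * (#l.leaves + #r.leaves)) := by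
  have hll : ∑ i ∈ l.leaves, ∑ j ∈ l.leaves, (node l r).lcaSize i j = l.lcaSum :=
    sum_congr rfl fun _ hi => sum_congr rfl fun _ hj => lcaSize_node_of_mem_left hi hj
  have hrr : ∑ i ∈ r.leaves, ∑ j ∈ r.leaves, (node l r).lcaSize i j = r.lcaSum :=
    sum_congr rfl fun _ hi => sum_congr rfl fun _ hj => lcaSize_node_of_mem_right hd hi hj
  have hlr : ∑ i ∈ l.leaves, ∑ j ∈ r.leaves, (node l r).lcaSize i j =
      #l.leaves * #r.leaves * (#l.leaves + #r.leaves) := by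
    rw [sum_congr rfl fun _ hi => sum_congr rfl fun _ hj =>
      lcaSize_node_of_mem_left_of_mem_right hd hi hj]
    simp [mul_assoc]
  have hrl : ∑ i ∈ r.leaves, ∑ j ∈ l.leaves, (node l r).lcaSize i j =
      #l.leaves * #r.leaves * (#l.leaves + #r.leaves) := by
    rw [sum_comm, ← hlr]
    exact sum_congr rfl fun _ _ => sum_congr rfl fun _ _ => lcaSize_comm _ _ _
  rw [lcaSum, leaves_node]
  simp only [sum_union hd, sum_add_distrib]
  rw [hll, hrr, hlr, hrl]
  ring

theorem three_mul_lcaSum {t : HTree n} (h : t.leafList.Nodup) :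
    3 * t.lcaSum = 2 * #t.leaves ^ 3 + #t.leaves := by
  induction t with
  | leaf => simp [lcaSum, leaves, leafList, lcaSize]
  | node l r ihl ihr =>
    obtain ⟨hl, hr, hlr⟩ := List.nodup_append'.1 h
    have hd : Disjoint l.leaves r.leaves := List.disjoint_toFinset_iff_disjoint.2 hlr
    rw [lcaSum_node hd, leaves_node, card_union_of_disjoint hd]
    linear_combination ihl hl + ihr hr

end HTree

/-- For the complete graph `K_n` with unit edge weights, every rooted binary tree
whose leaves are in bijection with the vertices has cost exactly `(n³ - n)/3`. -/
theorem complete_graph_cost (n : ℕ) (T : HTree n) (hT : T.IsFullTree) :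
    T.pairCost (fun _ _ => 1) = ((n : ℝ) ^ 3 - n) / 3 := by
  obtain ⟨hnd, hleaves⟩ := hT
  set S := ∑ p ∈ univ.filter (fun p : Fin n × Fin n => p.1 < p.2), T.lcaSize p.1 p.2
  have hcost : T.pairCost (fun _ _ => 1) = S := by simp [HTree.pairCost, S]
  have hsum : T.lcaSum = 2 * S + n := by
    rw [HTree.lcaSum, hleaves, ← sum_product', univ_product_univ,
      sum_prod_eq_two_nsmul_sum_lt_add_sum_diag _ T.lcaSize_comm]
    simp [HTree.lcaSize_self, hleaves, S]
  have hcubic := HTree.three_mul_lcaSum hnd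
  rw [hsum, hleaves, card_univ, Fintype.card_fin] at hcubic
  rw [hcost]
  linear_combination (by exact_mod_cast hcubic : (3 * (2 * S + n) : ℝ) = 2 * n ^ 3 + n) / 6
end

section
/- If T* is a tree on leaf set V and (A, B) is any partition of V, then the restrictions T*_A and T*_B of T* to A and B (restricting each split and discarding empty parts) satisfy cost_{G[A]}(T*_A) + cost_{G[B]}(T*_B) ≤ cost_G(T*). -/
open Finset

namespace HTree

/-- The cost of the restriction of a tree to a vertex subset `A`: each split
`S → (S₁, S₂)` is replaced by `(S ∩ A) → (S₁ ∩ A, S₂ ∩ A)`, with weights of the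
induced subgraph `G[A]` (edges within `A`). -/
def restrictCost (w : Fin n → Fin n → ℝ) (A : Finset (Fin n)) : HTree n → ℝ
  | .leaf _ => 0
  | .node l r =>
      (((l.leaves ∪ r.leaves) ∩ A).card : ℝ) * cut w (l.leaves ∩ A) (r.leaves ∩ A)
        + restrictCost w A l + restrictCost w A r

end HTree

/-- Restricting a tree `T*` to the two sides of any partition `(A, B)` of `V`
yields trees whose costs (w.r.t. the induced subgraphs) sum to at most `cost(T*)`. -/
theorem restricted_costs_le (n : ℕ) (w : Fin n → Fin n → ℝ)
    (hnonneg : ∀ i j, 0 ≤ w i j)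
    (Tstar : HTree n) (hT : Tstar.IsFullTree)
    (A B : Finset (Fin n)) (hdisj : Disjoint A B) (hunion : A ∪ B = Finset.univ) :
    Tstar.restrictCost w A + Tstar.restrictCost w B ≤ Tstar.splitCost w := by
  clear hT
  have cut_nonneg : ∀ (S T : Finset (Fin n)), 0 ≤ HTree.cut w S T := by
    intro S T
    exact Finset.sum_nonneg fun i _ => Finset.sum_nonneg fun j _ => hnonneg i j
  have cut_mono : ∀ (S T S' T' : Finset (Fin n)), S' ⊆ S → T' ⊆ T →
      HTree.cut w S' T' ≤ HTree.cut w S T := by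
    intro S T S' T' hS hT
    refine le_trans (Finset.sum_le_sum fun i _ =>
      Finset.sum_le_sum_of_subset_of_nonneg hT (fun j _ _ => hnonneg i j)) ?_
    exact Finset.sum_le_sum_of_subset_of_nonneg hS
      (fun i _ _ => Finset.sum_nonneg fun j _ => hnonneg i j)
  induction Tstar with
  | leaf v => simp [HTree.restrictCost, HTree.splitCost]
  | node l r ihl ihr =>
    simp only [HTree.restrictCost, HTree.splitCost]
    set S := l.leaves ∪ r.leaves with hS
    have hcard : ((S ∩ A).card : ℝ) + ((S ∩ B).card : ℝ) = (S.card : ℝ) := by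
      rw [← Nat.cast_add, ← Finset.card_union_of_disjoint
        (hdisj.mono Finset.inter_subset_right Finset.inter_subset_right)]
      congr 1
      rw [← Finset.inter_union_distrib_left, hunion, Finset.inter_univ]
    have h1 : HTree.cut w (l.leaves ∩ A) (r.leaves ∩ A) ≤ HTree.cut w l.leaves r.leaves :=
      cut_mono _ _ _ _ Finset.inter_subset_left Finset.inter_subset_left
    have h2 : HTree.cut w (l.leaves ∩ B) (r.leaves ∩ B) ≤ HTree.cut w l.leaves r.leaves :=
      cut_mono _ _ _ _ Finset.inter_subset_left Finset.inter_subset_left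
    have hmain : ((S ∩ A).card : ℝ) * HTree.cut w (l.leaves ∩ A) (r.leaves ∩ A)
        + ((S ∩ B).card : ℝ) * HTree.cut w (l.leaves ∩ B) (r.leaves ∩ B)
        ≤ (S.card : ℝ) * HTree.cut w l.leaves r.leaves := by
      calc ((S ∩ A).card : ℝ) * HTree.cut w (l.leaves ∩ A) (r.leaves ∩ A)
            + ((S ∩ B).card : ℝ) * HTree.cut w (l.leaves ∩ B) (r.leaves ∩ B)
          ≤ ((S ∩ A).card : ℝ) * HTree.cut w l.leaves r.leaves
            + ((S ∩ B).card : ℝ) * HTree.cut w l.leaves r.leaves := by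
            gcongr
        _ = (S.card : ℝ) * HTree.cut w l.leaves r.leaves := by
            rw [← add_mul, hcard]
    linarith
end
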